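/- arXiv:1210.6521 — 12 statements merged into one kernel-verified Lean document; each statement's English description precedes it below -/
import Mathlib

section
/- C_{∞P}(X), the set of all f ∈ C(X) such that for every natural number n the set {x : |f(x)| < 1/n} contains an element of P, is a proper subring of C(X). -/
/-! `C_{∞P}(X)` consists of the continuous functions tending to `0` along the filter with basis
`P`. Sums, negatives and products of such functions tend to `0` again, while the constant `1`
does not, because `∅ ∉ P` makes that filter proper. -/

open Filter Topology

namespace ContinuousMap

variable {X R : Type*} [TopologicalSpace X] [TopologicalSpace R]

def tendstoZero [NonUnitalNonAssocRing R] [IsTopologicalRing R] (l : Filter X) :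
    NonUnitalSubring C(X, R) where
  carrier := {f | Tendsto f l (𝓝 0)}
  zero_mem' := tendsto_const_nhds
  add_mem' {f g} (hf : Tendsto f l _) (hg : Tendsto g l _) := add_zero (0 : R) ▸ hf.add hg
  neg_mem' {f} (hf : Tendsto f l _) := neg_zero (G := R) ▸ hf.neg
  mul_mem' {f g} (hf : Tendsto f l _) (hg : Tendsto g l _) := mul_zero (0 : R) ▸ hf.mul hg

theorem mem_tendstoZero [NonUnitalNonAssocRing R] [IsTopologicalRing R] {l : Filter X} {f : C(X, R)} :
    f ∈ tendstoZero l ↔ Tendsto f l (𝓝 0) :=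
  Iff.rfl

theorem one_notMem_tendstoZero [NonAssocRing R] [IsTopologicalRing R] [T1Space R] [Nontrivial R]
    (l : Filter X) [l.NeBot] : (1 : C(X, R)) ∉ tendstoZero l :=
  fun h => one_ne_zero (tendsto_const_nhds_iff.1 (mem_tendstoZero.1 h))

end ContinuousMap

theorem Filter.HasBasis.tendsto_nhds_zero_iff_abs_lt_inv_succ {ι X : Type*} {l : Filter X}
    {p : ι → Prop} {s : ι → Set X} (hl : l.HasBasis p s) {f : X → ℝ} :
    Tendsto f l (𝓝 0) ↔ ∀ n : ℕ, ∃ i, p i ∧ s i ⊆ {x | |f x| < (1 : ℝ) / (n + 1)} := by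
  simp [hl.tendsto_iff Metric.nhds_basis_ball_inv_nat_succ, Set.subset_def]

theorem cInfP_proper_subring_general {X : Type*} [TopologicalSpace X]
    (P : Set (Set X)) (hne : P.Nonempty)
    (hAne : ∀ A ∈ P, A.Nonempty)
    (hbase : ∀ A ∈ P, ∀ B ∈ P, ∃ C ∈ P, C ⊆ A ∩ B) :
    ∃ S : NonUnitalSubring (ContinuousMap X ℝ),
      (S : Set (ContinuousMap X ℝ)) =
        {f : ContinuousMap X ℝ | ∀ n : ℕ, ∃ A ∈ P, A ⊆ {x | |f x| < (1 : ℝ) / (n + 1)}} ∧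
      (S : Set (ContinuousMap X ℝ)) ≠ Set.univ := by
  let B : FilterBasis X := ⟨P, hne, fun hA hB => hbase _ hA _ hB⟩
  have hB : B.filter.HasBasis (· ∈ P) id := ⟨fun _ => B.mem_filter_iff⟩
  have : B.filter.NeBot := hB.neBot_iff.2 (hAne _ ·)
  refine ⟨ContinuousMap.tendstoZero B.filter, ?_, ?_⟩
  · ext f
    exact hB.tendsto_nhds_zero_iff_abs_lt_inv_succ
  · exact fun h =>
      ContinuousMap.one_notMem_tendstoZero (R := ℝ) B.filter (Set.eq_univ_iff_forall.1 h 1)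

/-- `C_{∞P}(X)` is a proper (non-unital) subring of `C(X)`. -/
theorem cInfP_proper_subring {X : Type*} [TopologicalSpace X] [T2Space X]
    [CompletelyRegularSpace X]
    (P : Set (Set X)) (hne : P.Nonempty)
    (hopen : ∀ A ∈ P, IsOpen A) (hAne : ∀ A ∈ P, A.Nonempty)
    (hbase : ∀ A ∈ P, ∀ B ∈ P, ∃ C ∈ P, C ⊆ A ∩ B) :
    ∃ S : NonUnitalSubring (ContinuousMap X ℝ),
      (S : Set (ContinuousMap X ℝ)) =
        {f : ContinuousMap X ℝ | ∀ n : ℕ, ∃ A ∈ P, A ⊆ {x | |f x| < (1 : ℝ) / (n + 1)}} ∧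
      (S : Set (ContinuousMap X ℝ)) ≠ Set.univ :=
  cInfP_proper_subring_general P hne hAne hbase
end

section
/- For every open filter base P there exists an ideal P' of closed sets in X (closed under finite unions and closed subsets) such that C^P(X) = C_{P'}(X) and C_{∞P}(X) = C_∞^{P'}(X), where C_{P'}(X) = {f ∈ C(X) : cl(X∖Z(f)) ∈ P'} and C_∞^{P'}(X) = {f ∈ C(X) : {x : |f(x)| ≥ 1/n} ∈ P' for all n ∈ ℕ}. -/
/-!
Take `P'` to be the closed sets disjoint from some member of `P`; the filter-base property makes
it closed under finite unions. A set `A ∈ P` is open, so it misses the closure of `Z(f)ᶜ` as soon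
as it misses `Z(f)ᶜ`, i.e. as soon as `A ⊆ Z(f)`; likewise `A` misses the closed set
`{1/(n+1) ≤ |f|}` exactly when `A ⊆ {|f| < 1/(n+1)}`.
-/

open Set

section

variable {X : Type*} [TopologicalSpace X]

def closedDisjointIdeal (P : Set (Set X)) : Set (Set X) :=
  {F | IsClosed F ∧ ∃ A ∈ P, Disjoint F A}

namespace closedDisjointIdeal

variable {P : Set (Set X)} {F G : Set X}

theorem isClosed (hF : F ∈ closedDisjointIdeal P) : IsClosed F :=
  hF.1

theorem union_mem (hbase : ∀ A ∈ P, ∀ B ∈ P, ∃ C ∈ P, C ⊆ A ∩ B)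
    (hF : F ∈ closedDisjointIdeal P) (hG : G ∈ closedDisjointIdeal P) :
    F ∪ G ∈ closedDisjointIdeal P := by
  obtain ⟨hFc, A, hA, hFA⟩ := hF
  obtain ⟨hGc, B, hB, hGB⟩ := hG
  obtain ⟨C, hC, hCAB⟩ := hbase A hA B hB
  exact ⟨hFc.union hGc, C, hC, disjoint_union_left.2
    ⟨hFA.mono_right (hCAB.trans inter_subset_left),
      hGB.mono_right (hCAB.trans inter_subset_right)⟩⟩

theorem mem_of_subset (hF : F ∈ closedDisjointIdeal P) (hGF : G ⊆ F) (hG : IsClosed G) :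
    G ∈ closedDisjointIdeal P :=
  ⟨hG, hF.2.imp fun _ ⟨hA, hFA⟩ => ⟨hA, hFA.mono_left hGF⟩⟩

theorem compl_mem_iff {U : Set X} (hU : IsOpen U) :
    Uᶜ ∈ closedDisjointIdeal P ↔ ∃ A ∈ P, A ⊆ U := by
  simp only [closedDisjointIdeal, mem_ofPred_eq, isClosed_compl_iff, hU, true_and,
    disjoint_compl_left_iff_subset]

theorem closure_compl_mem_iff (hopen : ∀ A ∈ P, IsOpen A) {Z : Set X} :
    closure Zᶜ ∈ closedDisjointIdeal P ↔ ∃ A ∈ P, A ⊆ Z := by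
  refine ⟨fun ⟨_, A, hA, hZA⟩ => ⟨A, hA, ?_⟩, fun ⟨A, hA, hAZ⟩ => ⟨isClosed_closure, A, hA, ?_⟩⟩
  · exact disjoint_compl_left_iff_subset.1 (hZA.mono_left subset_closure)
  · exact (disjoint_compl_left_iff_subset.2 hAZ).closure_left (hopen A hA)

end closedDisjointIdeal

end

theorem exists_closed_ideal_general {X : Type*} [TopologicalSpace X]
    (P : Set (Set X))
    (hopen : ∀ A ∈ P, IsOpen A)
    (hbase : ∀ A ∈ P, ∀ B ∈ P, ∃ C ∈ P, C ⊆ A ∩ B) :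
    ∃ P' : Set (Set X),
      (∀ A ∈ P', IsClosed A) ∧
      (∀ A ∈ P', ∀ B ∈ P', A ∪ B ∈ P') ∧
      (∀ A ∈ P', ∀ B, B ⊆ A → IsClosed B → B ∈ P') ∧
      ({f : ContinuousMap X ℝ | ∃ A ∈ P, A ⊆ {x | f x = 0}} =
        {f : ContinuousMap X ℝ | closure {x | f x = 0}ᶜ ∈ P'}) ∧
      ({f : ContinuousMap X ℝ | ∀ n : ℕ, ∃ A ∈ P, A ⊆ {x | |f x| < 1 / (n + 1)}} =
        {f : ContinuousMap X ℝ | ∀ n : ℕ, {x | 1 / (n + 1) ≤ |f x|} ∈ P'}) := by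
  refine ⟨closedDisjointIdeal P, fun _ => closedDisjointIdeal.isClosed,
    fun _ hA _ hB => closedDisjointIdeal.union_mem hbase hA hB,
    fun _ hA _ hBA hB => closedDisjointIdeal.mem_of_subset hA hBA hB, ?_, ?_⟩
  · ext f
    exact (closedDisjointIdeal.closure_compl_mem_iff hopen).symm
  · ext f
    refine forall_congr' fun n => ?_
    have hlt_open : IsOpen {x | |f x| < 1 / (n + 1)} :=
      isOpen_lt f.continuous.abs continuous_const
    rw [← closedDisjointIdeal.compl_mem_iff hlt_open]
    simp only [compl_ofPred, not_lt]

/-- for every open filter base `P` there is an ideal `P'` of closed sets with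
`C^P(X) = C_{P'}(X)` and `C_{∞P}(X) = C_∞^{P'}(X)`. -/
theorem exists_closed_ideal {X : Type*} [TopologicalSpace X] [T2Space X]
    [CompletelyRegularSpace X]
    (P : Set (Set X)) (hne : P.Nonempty)
    (hopen : ∀ A ∈ P, IsOpen A) (hAne : ∀ A ∈ P, A.Nonempty)
    (hbase : ∀ A ∈ P, ∀ B ∈ P, ∃ C ∈ P, C ⊆ A ∩ B) :
    ∃ P' : Set (Set X),
      (∀ A ∈ P', IsClosed A) ∧
      (∀ A ∈ P', ∀ B ∈ P', A ∪ B ∈ P') ∧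
      (∀ A ∈ P', ∀ B, B ⊆ A → IsClosed B → B ∈ P') ∧
      ({f : ContinuousMap X ℝ | ∃ A ∈ P, A ⊆ {x | f x = 0}} =
        {f : ContinuousMap X ℝ | closure {x | f x = 0}ᶜ ∈ P'}) ∧
      ({f : ContinuousMap X ℝ | ∀ n : ℕ, ∃ A ∈ P, A ⊆ {x | |f x| < 1 / (n + 1)}} =
        {f : ContinuousMap X ℝ | ∀ n : ℕ, {x | 1 / (n + 1) ≤ |f x|} ∈ P'}) :=
  exists_closed_ideal_general P hopen hbase
end

section
/- If X is a non-Lindelöf completely regular Hausdorff space and P is the collection of open subsets A ⊆ X with X∖A Lindelöf, then C_{∞P}(X) = {f ∈ C(X) : X∖Z(f) is a Lindelöf subspace of X}. -/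
/-!
The support of `f` is the countable union of the closed sets `{1/(n+1) ≤ |f|}`. Such a set is
Lindelöf iff its open complement contains a member of `P`, and Lindelöfness passes to closed
subsets and to countable unions.
-/

open Set

theorem compl_setOf_eq_zero_eq_iUnion {X : Type*} (f : X → ℝ) :
    {x | f x = 0}ᶜ = ⋃ n : ℕ, {x | |f x| < 1 / (n + 1)}ᶜ := by
  ext x
  simp only [mem_compl_iff, mem_ofPred_eq, mem_iUnion, not_lt]
  constructor
  · intro hx
    obtain ⟨n, hn⟩ := exists_nat_one_div_lt (abs_pos.mpr hx)
    exact ⟨n, hn.le⟩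
  · rintro ⟨n, hn⟩ hx
    rw [hx, abs_zero] at hn
    exact (Nat.one_div_pos_of_nat.trans_le hn).false

section
variable {X : Type*} [TopologicalSpace X]

theorem isOpen_setOf_abs_lt {f : X → ℝ} (hf : Continuous f) (ε : ℝ) :
    IsOpen {x | |f x| < ε} :=
  isOpen_lt hf.abs continuous_const

theorem exists_isOpen_isLindelof_compl_subset_iff {U : Set X} (hU : IsOpen U) :
    (∃ A, (IsOpen A ∧ IsLindelof Aᶜ) ∧ A ⊆ U) ↔ IsLindelof Uᶜ := by
  constructor
  · rintro ⟨A, ⟨-, hA⟩, hAU⟩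
    exact hA.of_isClosed_subset hU.isClosed_compl (compl_subset_compl.mpr hAU)
  · intro hU'
    exact ⟨U, ⟨hU, hU'⟩, subset_rfl⟩

theorem isLindelof_compl_setOf_eq_zero_iff {f : X → ℝ} (hf : Continuous f) :
    IsLindelof {x | f x = 0}ᶜ ↔ ∀ n : ℕ, IsLindelof {x | |f x| < 1 / (n + 1)}ᶜ := by
  rw [compl_setOf_eq_zero_eq_iUnion]
  exact ⟨fun h n => h.of_isClosed_subset (isOpen_setOf_abs_lt hf _).isClosed_compl
    (subset_iUnion (fun n : ℕ => {x | |f x| < 1 / (n + 1)}ᶜ) n), isLindelof_iUnion⟩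

end

theorem cInfP_lindelof_general {X : Type*} [TopologicalSpace X] :
    {f : ContinuousMap X ℝ | ∀ n : ℕ,
        ∃ A ∈ {A : Set X | IsOpen A ∧ IsLindelof Aᶜ}, A ⊆ {x | |f x| < 1 / (n + 1)}} =
      {f : ContinuousMap X ℝ | IsLindelof {x | f x = 0}ᶜ} := by
  ext f
  simp only [mem_ofPred_eq,
    exists_isOpen_isLindelof_compl_subset_iff (isOpen_setOf_abs_lt f.continuous _)]
  exact (isLindelof_compl_setOf_eq_zero_iff f.continuous).symm

/-- for `P` the open sets with Lindelöf complement in a non-Lindelöf space,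
`C_{∞P}(X)` is the set of `f` with `X∖Z(f)` Lindelöf. -/
theorem cInfP_lindelof {X : Type*} [TopologicalSpace X] [T2Space X]
    [CompletelyRegularSpace X] (hX : ¬ LindelofSpace X) :
    {f : ContinuousMap X ℝ | ∀ n : ℕ,
        ∃ A ∈ {A : Set X | IsOpen A ∧ IsLindelof Aᶜ}, A ⊆ {x | |f x| < 1 / (n + 1)}} =
      {f : ContinuousMap X ℝ | IsLindelof {x | f x = 0}ᶜ} :=
  cInfP_lindelof_general
end

section
/- If every element of the open filter base P has Lindelöf complement in X, then C_{∞P}(X) is contained in the intersection of all free real maximal ideals of C(X); equivalently, every f ∈ C_{∞P}(X) lies in M^p for every p ∈ υX∖X. -/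
/-! Let `f ∈ C_{∞P}(X)` and let `M` be a free real maximal ideal with `f ∉ M`. Maximality gives
`m ∈ M` with `Z(m) ∩ Z(f) = ∅`. Choose `Aₙ ∈ P` on which `|f| < 1/(n+1)`. Since `M` is free, the
cozero sets of its members cover each Lindelöf set `Aₙᶜ`, and countably many of them suffice.
Realness makes these countably many members of `M`, together with `m`, vanish at a common point
`x`. Then `x ∈ ⋂ Aₙ`, so `f x = 0 = m x`, a contradiction. -/

open Set

section

variable {X : Type*} [TopologicalSpace X]

lemma Ideal.IsMaximal.exists_mem_forall_apply_ne_zero {R : Type*} [CommRing R]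
    [TopologicalSpace R] [IsTopologicalRing R] [Nontrivial R] {M : Ideal C(X, R)}
    (hM : M.IsMaximal) {f : C(X, R)} (hf : f ∉ M) : ∃ m ∈ M, ∀ x, f x = 0 → m x ≠ 0 := by
  obtain ⟨b, m, hm, hbm⟩ := hM.exists_inv hf
  refine ⟨m, hm, fun x hfx hmx => zero_ne_one (α := R) ?_⟩
  simpa [hfx, hmx] using ContinuousMap.congr_fun hbm x

lemma exists_apply_ne_zero_of_biInter_zeroSet_eq_empty {R : Type*} [Zero R]
    [TopologicalSpace R] {M : Set C(X, R)} (hfree : (⋂ g ∈ M, {x | g x = 0}) = ∅) (x : X) :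
    ∃ g ∈ M, g x ≠ 0 := by
  by_contra! h
  have hx : x ∈ ⋂ g ∈ M, {x | g x = 0} := mem_iInter₂.2 h
  simp [hfree] at hx

lemma IsLindelof.exists_countable_subset_forall_apply_ne_zero {R : Type*} [Zero R]
    [TopologicalSpace R] [T1Space R] {K : Set X} (hK : IsLindelof K) {M : Set C(X, R)}
    (hM : ∀ x ∈ K, ∃ g ∈ M, g x ≠ 0) :
    ∃ S ⊆ M, S.Countable ∧ ∀ x ∈ K, ∃ g ∈ S, g x ≠ 0 := by
  obtain ⟨S, hSM, hS, hKS⟩ :=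
    hK.elim_countable_subcover_image (c := fun g : C(X, R) => {x | g x ≠ 0})
    (fun g _ => isOpen_compl_singleton.preimage g.continuous)
    (fun x hx => mem_iUnion₂.2 (by simpa using hM x hx))
  exact ⟨S, hSM, hS, fun x hx => by simpa using hKS hx⟩

lemma Ideal.exists_forall_apply_eq_zero_of_countable {R : Type*} [CommRing R]
    [TopologicalSpace R] [IsTopologicalRing R] {M : Ideal C(X, R)}
    (hcip : ∀ s : ℕ → C(X, R), (∀ n, s n ∈ M) → (⋂ n, {x | s n x = 0}).Nonempty)
    {S : Set C(X, R)} (hSM : S ⊆ M) (hS : S.Countable) : ∃ x, ∀ g ∈ S, g x = 0 := by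
  obtain ⟨s, hs⟩ := (hS.insert 0).exists_eq_range (insert_nonempty 0 S)
  have hsM : ∀ n, s n ∈ M := fun n =>
    insert_subset M.zero_mem hSM (hs ▸ mem_range_self n : s n ∈ insert 0 S)
  obtain ⟨x, hx⟩ := hcip s hsM
  refine ⟨x, fun g hg => ?_⟩
  obtain ⟨n, rfl⟩ : g ∈ range s := hs ▸ mem_insert_of_mem 0 hg
  exact mem_iInter.1 hx n

lemma eq_zero_of_forall_abs_lt_one_div_succ {a : ℝ} (h : ∀ n : ℕ, |a| < 1 / (n + 1)) : a = 0 := by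
  by_contra ha
  obtain ⟨n, hn⟩ := exists_nat_one_div_lt (abs_pos.2 ha)
  exact (h n).not_gt hn

end

theorem cInfP_subset_free_real_maximal_general {X : Type*} [TopologicalSpace X]
    (P : Set (Set X))
    (hLind : ∀ A ∈ P, IsLindelof Aᶜ) :
    ∀ f ∈ {f : ContinuousMap X ℝ | ∀ n : ℕ, ∃ A ∈ P, A ⊆ {x | |f x| < 1 / (n + 1)}},
      ∀ M : Ideal (ContinuousMap X ℝ), M.IsMaximal →
        (⋂ g ∈ M, {x | g x = 0}) = ∅ →
        (∀ s : ℕ → ContinuousMap X ℝ, (∀ n, s n ∈ M) →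
          (⋂ n, {x | s n x = 0}).Nonempty) →
        f ∈ M := by
  intro f hf M hM hfree hcip
  by_contra hfM
  obtain ⟨m, hmM, hm⟩ := hM.exists_mem_forall_apply_ne_zero hfM
  choose A hAP hAf using hf
  have hMfree := exists_apply_ne_zero_of_biInter_zeroSet_eq_empty hfree
  choose S hSM hS hSA using fun n =>
    (hLind (A n) (hAP n)).exists_countable_subset_forall_apply_ne_zero fun x _ => hMfree x
  obtain ⟨x, hx⟩ := M.exists_forall_apply_eq_zero_of_countable hcip
    (insert_subset hmM (iUnion_subset hSM)) ((countable_iUnion hS).insert m)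
  have hxA : ∀ n, x ∈ A n := fun n => by
    by_contra hxn
    obtain ⟨g, hg, hgx⟩ := hSA n x hxn
    exact hgx (hx g (mem_insert_of_mem m (mem_iUnion.2 ⟨n, hg⟩)))
  have hfx : f x = 0 := eq_zero_of_forall_abs_lt_one_div_succ fun n => hAf n (hxA n)
  exact hm x hfx (hx m (mem_insert m _))

/-- if every member of `P` has Lindelöf complement, then `C_{∞P}(X)` is
contained in every free real maximal ideal of `C(X)` (realness expressed via the countable
intersection property of its zero sets). -/
theorem cInfP_subset_free_real_maximal {X : Type*} [TopologicalSpace X] [T2Space X]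
    [CompletelyRegularSpace X]
    (P : Set (Set X)) (hne : P.Nonempty)
    (hopen : ∀ A ∈ P, IsOpen A) (hAne : ∀ A ∈ P, A.Nonempty)
    (hbase : ∀ A ∈ P, ∀ B ∈ P, ∃ C ∈ P, C ⊆ A ∩ B)
    (hLind : ∀ A ∈ P, IsLindelof Aᶜ) :
    ∀ f ∈ {f : ContinuousMap X ℝ | ∀ n : ℕ, ∃ A ∈ P, A ⊆ {x | |f x| < 1 / (n + 1)}},
      ∀ M : Ideal (ContinuousMap X ℝ), M.IsMaximal →
        (⋂ g ∈ M, {x | g x = 0}) = ∅ →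
        (∀ s : ℕ → ContinuousMap X ℝ, (∀ n, s n ∈ M) →
          (⋂ n, {x | s n x = 0}).Nonempty) →
        f ∈ M :=
  cInfP_subset_free_real_maximal_general P hLind
end

section
/- Let X be an infinite completely regular Hausdorff space and P = {A ⊊ X : X∖A finite}. Then C_{∞P}(X) = C_F(X) (the functions with finite support, i.e. X∖Z(f) finite) if and only if the set of isolated points of X is finite. -/
/-!
`C_{∞P}(X)` is the set of continuous functions tending to `0` along the cofinite filter. Such a
function is nonzero only at isolated points: if `f x ≠ 0`, a neighbourhood of `f x` missing a
neighbourhood of `0` pulls back to a finite open set containing `x`. Hence finitely many isolated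
points force finite support. Conversely, given infinitely many isolated points `x₀, x₁, …`, the
function equal to `1 / (k + 1)` at `x_k` and `0` elsewhere tends to `0` cofinitely, is continuous
(isolated points are harmless, and elsewhere it is `0`, its cofinite limit), and has infinite
support.
-/

open Topology Filter Function Set

lemma exists_proper_cofinite_subset_iff {X : Type*} [Nonempty X] {B : Set X} :
    (∃ A ∈ {A : Set X | A ≠ univ ∧ Aᶜ.Finite}, A ⊆ B) ↔ B ∈ cofinite := by
  constructor
  · rintro ⟨A, ⟨-, hA⟩, hAB⟩
    exact mem_of_superset hA hAB
  · intro hB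
    obtain ⟨x₀⟩ := ‹Nonempty X›
    refine ⟨B \ {x₀}, ⟨fun h => ?_, inter_mem hB (finite_singleton x₀).compl_mem_cofinite⟩,
      sdiff_subset⟩
    exact (h.symm ▸ mem_univ x₀ : x₀ ∈ B \ {x₀}).2 rfl

lemma tendsto_nhds_zero_iff_forall_nat {α : Type*} {l : Filter α} {f : α → ℝ} :
    Tendsto f l (𝓝 0) ↔ ∀ n : ℕ, ∀ᶠ x in l, |f x| < 1 / (n + 1) := by
  simp only [Metric.nhds_basis_ball_inv_nat_succ.tendsto_right_iff, mem_ball_zero_iff,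
    Real.norm_eq_abs, true_implies]

section CofiniteLimits

variable {X Y : Type*} [TopologicalSpace X] [TopologicalSpace Y]

lemma isOpen_singleton_of_tendsto_cofinite_of_ne [T1Space X] [T2Space Y] {f : X → Y}
    (hf : Continuous f) {y : Y} (hlim : Tendsto f cofinite (𝓝 y)) {x : X} (hx : f x ≠ y) :
    IsOpen ({x} : Set X) := by
  obtain ⟨U, V, hU, hV, hxU, hyV, hUV⟩ := t2_separation hx
  have hV_cofinite : (f ⁻¹' V)ᶜ.Finite := hlim (hV.mem_nhds hyV)
  exact isOpen_singleton_of_finite_mem_nhds x ((hU.preimage hf).mem_nhds hxU)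
    (hV_cofinite.subset fun z hz => hUV.notMem_of_mem_left hz)

lemma continuous_of_tendsto_cofinite [T1Space X] {f : X → Y} {y : Y}
    (hlim : Tendsto f cofinite (𝓝 y)) (hy : ∀ x, ¬IsOpen ({x} : Set X) → f x = y) :
    Continuous f := by
  refine continuous_iff_continuousAt.2 fun x => ?_
  by_cases hx : IsOpen ({x} : Set X)
  · rw [ContinuousAt, (isOpen_singleton_iff_nhds_eq_pure x).1 hx]
    exact tendsto_pure_nhds f x
  · rw [← continuousWithinAt_compl_self, ContinuousWithinAt, hy x hx]
    exact hlim.mono_left (nhdsNE_le_cofinite x)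

end CofiniteLimits

lemma Function.Injective.tendsto_cofinite_extend {α β Y : Type*} [TopologicalSpace Y]
    {ι : α → β} (hι : Injective ι) {u : α → Y} {y : Y} (hu : Tendsto u cofinite (𝓝 y)) :
    Tendsto (extend ι u fun _ => y) cofinite (𝓝 y) := by
  intro V hV
  have hu_fin : (u ⁻¹' V)ᶜ.Finite := hu hV
  refine (hu_fin.image ι).subset fun b hb => ?_
  by_cases hb_range : ∃ a, ι a = b
  · obtain ⟨a, rfl⟩ := hb_range
    exact ⟨a, by simpa [hι.extend_apply] using hb, rfl⟩
  · exact absurd (mem_of_mem_nhds hV) (by simpa [extend_apply' _ _ _ hb_range] using hb)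

lemma Set.Infinite.exists_tendsto_cofinite_zero {X : Type*} {S : Set X} (hS : S.Infinite) :
    ∃ g : X → ℝ, Tendsto g cofinite (𝓝 0) ∧ (support g).Infinite ∧ support g ⊆ S := by
  set e := Set.Infinite.natEmbedding S hS
  set ι : ℕ → X := Subtype.val ∘ e
  have hι : Injective ι := Subtype.val_injective.comp e.injective
  set u : ℕ → ℝ := fun k => 1 / (k + 1)
  have hu : Tendsto u cofinite (𝓝 0) := by
    rw [Nat.cofinite_eq_atTop]
    exact tendsto_one_div_add_atTop_nhds_zero_nat
  refine ⟨extend ι u fun _ => 0, hι.tendsto_cofinite_extend hu, ?_, ?_⟩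
  · refine (infinite_range_of_injective hι).mono ?_
    rintro _ ⟨k, rfl⟩
    simp only [mem_support, hι.extend_apply, u]
    positivity
  · intro x hx
    by_cases hx_range : ∃ k, ι k = x
    · obtain ⟨k, rfl⟩ := hx_range
      exact (e k).2
    · exact absurd (extend_apply' _ _ _ hx_range) hx

theorem cInfP_eq_cF_iff_general {X : Type*} [TopologicalSpace X] [T2Space X]
    [Infinite X] :
    ({f : ContinuousMap X ℝ | ∀ n : ℕ,
        ∃ A ∈ {A : Set X | A ≠ Set.univ ∧ Aᶜ.Finite}, A ⊆ {x | |f x| < 1 / (n + 1)}} =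
      {f : ContinuousMap X ℝ | ({x | f x = 0}ᶜ).Finite}) ↔
    {x : X | IsOpen ({x} : Set X)}.Finite := by
  have hCinfP : {f : ContinuousMap X ℝ | ∀ n : ℕ,
      ∃ A ∈ {A : Set X | A ≠ Set.univ ∧ Aᶜ.Finite}, A ⊆ {x | |f x| < 1 / (n + 1)}} =
      {f : ContinuousMap X ℝ | Tendsto f cofinite (𝓝 0)} := by
    ext f
    exact (forall_congr' fun n => exists_proper_cofinite_subset_iff).trans
      tendsto_nhds_zero_iff_forall_nat.symm
  rw [hCinfP]
  constructor
  · intro hC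
    by_contra hinf
    obtain ⟨g, hg, hg_inf, hg_iso⟩ := Set.Infinite.exists_tendsto_cofinite_zero hinf
    have hg_cont : Continuous g := continuous_of_tendsto_cofinite hg fun x hx =>
      notMem_support.1 fun hgx => hx (hg_iso hgx)
    have hg_fin : (support g).Finite :=
      hC.subset (show (⟨g, hg_cont⟩ : C(X, ℝ)) ∈ _ from hg)
    exact hg_inf hg_fin
  · intro hfin
    ext f
    refine ⟨fun hf => hfin.subset fun x hx =>
      isOpen_singleton_of_tendsto_cofinite_of_ne f.continuous hf hx, fun hf => ?_⟩
    exact tendsto_nhds_of_eventually_eq (eventually_cofinite.2 hf)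

/-- for `P` the cofinite proper open sets of an infinite space,
`C_{∞P}(X) = C_F(X)` iff the set of isolated points of `X` is finite. -/
theorem cInfP_eq_cF_iff {X : Type*} [TopologicalSpace X] [T2Space X]
    [CompletelyRegularSpace X] [Infinite X] :
    ({f : ContinuousMap X ℝ | ∀ n : ℕ,
        ∃ A ∈ {A : Set X | A ≠ Set.univ ∧ Aᶜ.Finite}, A ⊆ {x | |f x| < 1 / (n + 1)}} =
      {f : ContinuousMap X ℝ | ({x | f x = 0}ᶜ).Finite}) ↔
    {x : X | IsOpen ({x} : Set X)}.Finite :=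
  cInfP_eq_cF_iff_general
end

section
/- C^P(X) is a free ideal of C(X) (i.e. ⋂_{f ∈ C^P(X)} Z(f) = ∅) if and only if the filter F generated by P has no cluster point, i.e. ⋂_{A∈P} cl(A) = ∅. -/
/-!
In a completely regular space a point outside `closure A` is separated from it by a continuous
function vanishing on `A`, so `closure A` is the intersection of the zero sets containing `A`.
Hence the common zeros of `C^P(X)` are exactly the points of `⋂ A ∈ P, closure A`.
-/

open Set

section

variable {X : Type*} [TopologicalSpace X] [CompletelyRegularSpace X]

theorem CompletelyRegularSpace.exists_continuousMap_eqOn_zero_of_notMem {K : Set X}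
    (hK : IsClosed K) {x : X} (hx : x ∉ K) : ∃ f : C(X, ℝ), EqOn f 0 K ∧ f x ≠ 0 := by
  obtain ⟨f, hf, hfx, hfK⟩ := CompletelyRegularSpace.completely_regular x K hK hx
  refine ⟨⟨fun y ↦ 1 - (f y : ℝ), by fun_prop⟩, fun y hy ↦ ?_, ?_⟩
  · simp [hfK hy]
  · simp [hfx]

theorem iInter_zeroSet_of_subset_eq_closure (A : Set X) :
    ⋂ f ∈ {f : C(X, ℝ) | A ⊆ {x | f x = 0}}, {x | f x = 0} = closure A := by
  refine Subset.antisymm (fun x hx ↦ by_contra fun hxA ↦ ?_) ?_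
  · obtain ⟨f, hfA, hfx⟩ :=
      CompletelyRegularSpace.exists_continuousMap_eqOn_zero_of_notMem isClosed_closure hxA
    exact hfx (mem_iInter₂.mp hx f fun a ha ↦ hfA (subset_closure ha))
  · exact subset_iInter₂ fun f hf ↦ closure_minimal hf (isClosed_eq f.continuous continuous_const)

theorem iInter_zeroSet_of_exists_subset_eq_iInter_closure (P : Set (Set X)) :
    ⋂ f ∈ {f : C(X, ℝ) | ∃ A ∈ P, A ⊆ {x | f x = 0}}, {x | f x = 0} =
      ⋂ A ∈ P, closure A := by
  simp_rw [← iInter_zeroSet_of_subset_eq_closure]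
  ext x
  simp only [mem_iInter, mem_ofPred_eq]
  exact ⟨fun h A hA f hf ↦ h f ⟨A, hA, hf⟩, fun h f ⟨A, hA, hf⟩ ↦ h A hA f hf⟩

end

theorem cP_free_iff_general {X : Type*} [TopologicalSpace X]
    [CompletelyRegularSpace X]
    (P : Set (Set X)) :
    (⋂ f ∈ {f : ContinuousMap X ℝ | ∃ A ∈ P, A ⊆ {x | f x = 0}}, {x | f x = 0}) = ∅ ↔
      (⋂ A ∈ P, closure A) = ∅ := by
  rw [iInter_zeroSet_of_exists_subset_eq_iInter_closure]

/-- `C^P(X)` is a free ideal iff the filter generated by `P` has no cluster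
point, i.e. `⋂_{A∈P} cl A = ∅`. -/
theorem cP_free_iff {X : Type*} [TopologicalSpace X] [T2Space X]
    [CompletelyRegularSpace X]
    (P : Set (Set X)) (hne : P.Nonempty)
    (hopen : ∀ A ∈ P, IsOpen A) (hAne : ∀ A ∈ P, A.Nonempty)
    (hbase : ∀ A ∈ P, ∀ B ∈ P, ∃ C ∈ P, C ⊆ A ∩ B) :
    (⋂ f ∈ {f : ContinuousMap X ℝ | ∃ A ∈ P, A ⊆ {x | f x = 0}}, {x | f x = 0}) = ∅ ↔
      (⋂ A ∈ P, closure A) = ∅ :=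
  cP_free_iff_general P
end

section
/- The following are equivalent for an open filter base P on X: (1) every element of P is dense in X; (2) C_{∞P}(X) = {0}; (3) C^P(X) = {0}. -/
/-!
A continuous function that is small on a dense set is small everywhere, so when every member of
`P` is dense only `0` can tend to zero along `P`. Conversely, if some `A ∈ P` is not dense,
complete regularity separates a point outside `closure A` from `closure A` by a continuous
function, which yields a nonzero continuous function vanishing on `A`.
-/

open Set

namespace ContinuousMap

variable {X : Type*} [TopologicalSpace X]

/-- The ideal `C^P(X)`. -/
def vanishingAlong (P : Set (Set X)) : Set C(X, ℝ) :=
  {f | ∃ A ∈ P, A ⊆ {x | f x = 0}}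

/-- The ideal `C_{∞P}(X)`. -/
def tendstoZeroAlong (P : Set (Set X)) : Set C(X, ℝ) :=
  {f | ∀ n : ℕ, ∃ A ∈ P, A ⊆ {x | |f x| < 1 / (n + 1)}}

variable {P : Set (Set X)}

theorem zero_mem_vanishingAlong (hne : P.Nonempty) : 0 ∈ vanishingAlong P :=
  let ⟨A, hA⟩ := hne
  ⟨A, hA, fun _ _ => rfl⟩

theorem vanishingAlong_subset_tendstoZeroAlong : vanishingAlong P ⊆ tendstoZeroAlong P := by
  rintro f ⟨A, hA, hfA⟩ n
  refine ⟨A, hA, fun x hx => ?_⟩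
  have hfx : f x = 0 := hfA hx
  show |f x| < 1 / (n + 1)
  rw [hfx, abs_zero]
  positivity

theorem abs_le_of_abs_lt_on_dense {A : Set X} (hA : Dense A) (f : C(X, ℝ)) {ε : ℝ}
    (hfA : ∀ x ∈ A, |f x| < ε) (x : X) : |f x| ≤ ε :=
  have hclosure : closure A ⊆ {y | |f y| ≤ ε} :=
    (closure_mono hfA).trans
      (closure_lt_subset_le (continuous_abs.comp f.continuous) continuous_const)
  hclosure (hA.closure_eq ▸ mem_univ x)

theorem eq_zero_of_mem_tendstoZeroAlong (hdense : ∀ A ∈ P, Dense A) {f : C(X, ℝ)}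
    (hf : f ∈ tendstoZeroAlong P) : f = 0 := by
  ext x
  have hsmall (n : ℕ) : |f x| ≤ 1 / (n + 1) :=
    let ⟨A, hA, hfA⟩ := hf n
    abs_le_of_abs_lt_on_dense (hdense A hA) f hfA x
  have : |f x| ≤ 0 := ge_of_tendsto' tendsto_one_div_add_atTop_nhds_zero_nat hsmall
  simpa using this

theorem tendstoZeroAlong_eq_zero (hne : P.Nonempty) (hdense : ∀ A ∈ P, Dense A) :
    tendstoZeroAlong P = {0} :=
  eq_singleton_iff_unique_mem.mpr
    ⟨vanishingAlong_subset_tendstoZeroAlong (zero_mem_vanishingAlong hne),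
      fun _ => eq_zero_of_mem_tendstoZeroAlong hdense⟩

theorem vanishingAlong_eq_zero_of_tendstoZeroAlong_eq_zero (hne : P.Nonempty)
    (h : tendstoZeroAlong P = {0}) : vanishingAlong P = {0} :=
  eq_singleton_iff_unique_mem.mpr
    ⟨zero_mem_vanishingAlong hne, fun _ hf =>
      mem_singleton_iff.mp (h ▸ vanishingAlong_subset_tendstoZeroAlong hf)⟩

theorem dense_of_forall_eqOn_zero [CompletelyRegularSpace X] {A : Set X}
    (h : ∀ f : C(X, ℝ), EqOn f 0 A → f = 0) : Dense A := by
  by_contra hA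
  obtain ⟨x, hx⟩ : ∃ x, x ∉ closure A := by
    simpa [dense_iff_closure_eq, eq_univ_iff_forall] using hA
  obtain ⟨g, hg, hgx, hgA⟩ :=
    CompletelyRegularSpace.completely_regular x (closure A) isClosed_closure hx
  let f : C(X, ℝ) := ⟨fun y => 1 - (g y : ℝ), by fun_prop⟩
  have hfA : EqOn f 0 A := fun y hy => by simp [f, hgA (subset_closure hy)]
  have hfx : f x = 1 := by simp [f, hgx]
  simp [h f hfA] at hfx

theorem dense_of_vanishingAlong_eq_zero [CompletelyRegularSpace X]
    (h : vanishingAlong P = {0}) : ∀ A ∈ P, Dense A := fun A hA =>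
  dense_of_forall_eqOn_zero fun f hfA => (h ▸ ⟨A, hA, hfA⟩ : f ∈ ({0} : Set C(X, ℝ)))

end ContinuousMap

open ContinuousMap in
theorem dense_iff_zero_general {X : Type*} [TopologicalSpace X]
    [CompletelyRegularSpace X]
    (P : Set (Set X)) (hne : P.Nonempty) :
    ((∀ A ∈ P, Dense A) ↔
      {f : ContinuousMap X ℝ | ∀ n : ℕ, ∃ A ∈ P, A ⊆ {x | |f x| < 1 / (n + 1)}} = {0}) ∧
    (({f : ContinuousMap X ℝ | ∀ n : ℕ, ∃ A ∈ P, A ⊆ {x | |f x| < 1 / (n + 1)}} = {0}) ↔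
      {f : ContinuousMap X ℝ | ∃ A ∈ P, A ⊆ {x | f x = 0}} = {0}) := by
  change ((∀ A ∈ P, Dense A) ↔ tendstoZeroAlong P = {0}) ∧
    (tendstoZeroAlong P = {0} ↔ vanishingAlong P = {0})
  have h12 := tendstoZeroAlong_eq_zero hne
  have h23 := vanishingAlong_eq_zero_of_tendstoZeroAlong_eq_zero hne
  have h31 : vanishingAlong P = {0} → ∀ A ∈ P, Dense A := dense_of_vanishingAlong_eq_zero
  exact ⟨⟨h12, h31 ∘ h23⟩, ⟨h23, h12 ∘ h31⟩⟩

/-- every member of `P` is dense iff `C_{∞P}(X) = 0` iff `C^P(X) = 0`. -/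
theorem dense_iff_zero {X : Type*} [TopologicalSpace X] [T2Space X]
    [CompletelyRegularSpace X]
    (P : Set (Set X)) (hne : P.Nonempty)
    (hopen : ∀ A ∈ P, IsOpen A) (hAne : ∀ A ∈ P, A.Nonempty)
    (hbase : ∀ A ∈ P, ∀ B ∈ P, ∃ C ∈ P, C ⊆ A ∩ B) :
    ((∀ A ∈ P, Dense A) ↔
      {f : ContinuousMap X ℝ | ∀ n : ℕ, ∃ A ∈ P, A ⊆ {x | |f x| < 1 / (n + 1)}} = {0}) ∧
    (({f : ContinuousMap X ℝ | ∀ n : ℕ, ∃ A ∈ P, A ⊆ {x | |f x| < 1 / (n + 1)}} = {0}) ↔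
      {f : ContinuousMap X ℝ | ∃ A ∈ P, A ⊆ {x | f x = 0}} = {0}) :=
  dense_iff_zero_general P hne
end

section
/- A closed subset A of X is an F-CG_δ set if and only if A = Z(f) for some f ∈ C_{∞P}(X). -/
/-!
If `g i` vanishes on `A (i+1)` and equals `1` off `A i`, the sets `A i` decrease, and after
clamping the `g i` to `[0, 1]` the function `f = ∑ 2^(-i) g i` vanishes exactly on `⋂ i, A i`;
on `A (n+2)` the first `n+2` terms vanish, so `f ≤ 2^(-n-1) < 1/(n+1)` there.
Conversely, for `f ∈ C_{∞P}(X)` the sets `A n = {|f| < 1/(n+1)}` work: `cl A (n+1)` lies in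
`{|f| ≤ 1/(n+2)}`, which a piecewise linear function of `|f|` separates from `{|f| ≥ 1/(n+1)}`.
-/

/-- `A` is an `F`-`CG_δ` set for the filter generated by the open filter base `P`. -/
def IsFCGdelta {X : Type*} [TopologicalSpace X] (P : Set (Set X)) (A : Set X) : Prop :=
  ∃ B : ℕ → Set X, A = ⋂ i, B i ∧ (∀ i, IsOpen (B i)) ∧
    (∀ i, ∃ Q ∈ P, Q ⊆ B i) ∧
    ∀ i, ∃ g : ContinuousMap X ℝ,
      (∀ x ∈ closure (B (i + 1)), g x = 0) ∧ ∀ x ∉ B i, g x = 1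

open Set

section HalvingSum

variable {X : Type*} {u : ℕ → X → ℝ}

lemma summable_geometric_inv_two : Summable fun i : ℕ ↦ (2⁻¹ : ℝ) ^ i :=
  summable_geometric_of_lt_one (by norm_num) (by norm_num)

noncomputable def halvingSum (u : ℕ → X → ℝ) (x : X) : ℝ :=
  ∑' i, (2⁻¹ : ℝ) ^ i * u i x

lemma summable_halvingSum (hu : ∀ i x, u i x ∈ Icc (0 : ℝ) 1) (x : X) :
    Summable fun i ↦ (2⁻¹ : ℝ) ^ i * u i x :=
  .of_nonneg_of_le (fun i ↦ mul_nonneg (by positivity) (hu i x).1)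
    (fun i ↦ mul_le_of_le_one_right (by positivity) (hu i x).2)
    summable_geometric_inv_two

lemma halvingSum_nonneg (hu : ∀ i x, u i x ∈ Icc (0 : ℝ) 1) (x : X) : 0 ≤ halvingSum u x :=
  tsum_nonneg fun i ↦ mul_nonneg (by positivity) (hu i x).1

lemma halvingSum_eq_zero_iff (hu : ∀ i x, u i x ∈ Icc (0 : ℝ) 1) (x : X) :
    halvingSum u x = 0 ↔ ∀ i, u i x = 0 := by
  rw [halvingSum, ← (summable_halvingSum hu x).hasSum_iff,
    hasSum_zero_iff_of_nonneg fun i ↦ mul_nonneg (by positivity) (hu i x).1, funext_iff]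
  simp

lemma halvingSum_le_of_forall_lt_eq_zero (hu : ∀ i x, u i x ∈ Icc (0 : ℝ) 1) {x : X} {n : ℕ}
    (h : ∀ j < n, u j x = 0) : halvingSum u x ≤ 2 * 2⁻¹ ^ n := by
  rw [← tsum_geometric_inv_two_ge]
  refine (summable_halvingSum hu x).tsum_le_tsum (fun i ↦ ?_) ?_
  · split_ifs with hi
    · exact mul_le_of_le_one_right (by positivity) (hu i x).2
    · simp [h i (not_le.1 hi)]
  · exact .of_nonneg_of_le (fun i ↦ by split_ifs <;> positivity)
      (fun i ↦ by split_ifs <;> simp) summable_geometric_inv_two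

lemma continuous_halvingSum [TopologicalSpace X] (hc : ∀ i, Continuous (u i))
    (hu : ∀ i x, u i x ∈ Icc (0 : ℝ) 1) : Continuous (halvingSum u) :=
  continuous_tsum (fun i ↦ continuous_const.mul (hc i))
    summable_geometric_inv_two fun i x ↦ by
      rw [Real.norm_of_nonneg (mul_nonneg (by positivity) (hu i x).1)]
      exact mul_le_of_le_one_right (by positivity) (hu i x).2

end HalvingSum

section ZeroSets

variable {X : Type*}

lemma continuous_projIcc_zero_one_comp [TopologicalSpace X] {f : X → ℝ} (hf : Continuous f) :
    Continuous fun x ↦ (projIcc (0 : ℝ) 1 zero_le_one (f x) : ℝ) :=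
  continuous_subtype_val.comp (continuous_projIcc.comp hf)

lemma antitone_of_eq_zero_of_eq_one {B : ℕ → Set X} {g : ℕ → X → ℝ}
    (h0 : ∀ i, ∀ x ∈ B (i + 1), g i x = 0) (h1 : ∀ i, ∀ x ∉ B i, g i x = 1) : Antitone B :=
  antitone_nat_of_succ_le fun i x hx ↦ by
    by_contra hxi
    simpa [h0 i x hx] using h1 i x hxi

lemma inv_two_pow_lt_one_div_succ (n : ℕ) : (2⁻¹ : ℝ) ^ (n + 1) < 1 / (n + 1) := by
  rw [inv_pow, ← one_div]
  exact one_div_lt_one_div_of_lt (by positivity) (by exact_mod_cast Nat.lt_two_pow_self)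

theorem IsFCGdelta.exists_eq_setOf_eq_zero [TopologicalSpace X] {P : Set (Set X)} {A : Set X}
    (hA : IsFCGdelta P A) :
    ∃ f : C(X, ℝ), (∀ n : ℕ, ∃ Q ∈ P, Q ⊆ {x | |f x| < 1 / (n + 1)}) ∧ A = {x | f x = 0} := by
  obtain ⟨B, rfl, -, hBP, hg⟩ := hA
  choose g hg0 hg1 using hg
  let u i x : ℝ := projIcc 0 1 zero_le_one (g i x)
  have hu : ∀ i x, u i x ∈ Icc (0 : ℝ) 1 := fun i x ↦ (projIcc 0 1 zero_le_one (g i x)).2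
  have hu0 : ∀ i, ∀ x ∈ B (i + 1), u i x = 0 := fun i x hx ↦ by
    simp [u, hg0 i x (subset_closure hx)]
  have hu1 : ∀ i, ∀ x ∉ B i, u i x = 1 := fun i x hx ↦ by simp [u, hg1 i x hx]
  have hB : Antitone B := antitone_of_eq_zero_of_eq_one hu0 hu1
  have hc : ∀ i, Continuous (u i) := fun i ↦ continuous_projIcc_zero_one_comp (g i).continuous
  refine ⟨⟨halvingSum u, continuous_halvingSum hc hu⟩, fun n ↦ ?_, ?_⟩
  · obtain ⟨Q, hQP, hQB⟩ := hBP (n + 2)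
    refine ⟨Q, hQP, fun x hx ↦ ?_⟩
    have hle : halvingSum u x ≤ 2 * 2⁻¹ ^ (n + 2) :=
      halvingSum_le_of_forall_lt_eq_zero hu fun j hj ↦ hu0 j x (hB (by omega) (hQB hx))
    rw [mem_ofPred_eq, ContinuousMap.coe_mk, abs_of_nonneg (halvingSum_nonneg hu x)]
    calc halvingSum u x ≤ 2 * 2⁻¹ ^ (n + 2) := hle
      _ = 2⁻¹ ^ (n + 1) := by ring
      _ < 1 / (n + 1) := inv_two_pow_lt_one_div_succ n
  · ext x
    simp only [mem_iInter, mem_ofPred_eq, ContinuousMap.coe_mk, halvingSum_eq_zero_iff hu]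
    refine ⟨fun hx i ↦ hu0 i x (hx (i + 1)), fun hx i ↦ ?_⟩
    by_contra hxi
    simpa [hx i] using hu1 i x hxi

lemma setOf_eq_zero_eq_iInter_abs_lt (f : X → ℝ) :
    {x | f x = 0} = ⋂ n : ℕ, {x | |f x| < 1 / ((n : ℝ) + 1)} := by
  ext x
  simp only [mem_ofPred_eq, mem_iInter]
  refine ⟨fun hx n ↦ by simp [hx, Nat.cast_add_one_pos], fun hx ↦ ?_⟩
  by_contra hfx
  obtain ⟨n, hn⟩ := exists_nat_one_div_lt (abs_pos.2 hfx)
  exact (hx n).not_gt hn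

lemma exists_continuous_zero_one_of_lt [TopologicalSpace X] {h : X → ℝ} (hh : Continuous h)
    {c d : ℝ} (hcd : c < d) :
    ∃ g : C(X, ℝ), (∀ x, h x ≤ c → g x = 0) ∧ ∀ x, d ≤ h x → g x = 1 := by
  refine ⟨⟨fun x ↦ projIcc (0 : ℝ) 1 zero_le_one ((h x - c) / (d - c)),
    continuous_projIcc_zero_one_comp ((hh.sub continuous_const).div_const _)⟩,
    fun x hx ↦ ?_, fun x hx ↦ ?_⟩
  · have : (h x - c) / (d - c) ≤ 0 := div_nonpos_of_nonpos_of_nonneg (by linarith) (by linarith)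
    simp [projIcc_of_le_left _ this]
  · have : 1 ≤ (h x - c) / (d - c) := by rw [le_div_iff₀ (by linarith)]; linarith
    simp [projIcc_of_right_le _ this]

theorem isFCGdelta_setOf_eq_zero [TopologicalSpace X] {P : Set (Set X)} (f : C(X, ℝ))
    (hf : ∀ n : ℕ, ∃ Q ∈ P, Q ⊆ {x | |f x| < 1 / (n + 1)}) : IsFCGdelta P {x | f x = 0} := by
  refine ⟨fun n ↦ {x | |f x| < 1 / ((n : ℝ) + 1)}, setOf_eq_zero_eq_iInter_abs_lt f,
    fun n ↦ isOpen_lt (by fun_prop) (by fun_prop), hf, fun i ↦ ?_⟩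
  obtain ⟨g, hg0, hg1⟩ := exists_continuous_zero_one_of_lt (by fun_prop : Continuous (|f ·|))
    (one_div_lt_one_div_of_lt (Nat.cast_add_one_pos i) (lt_add_one ((i : ℝ) + 1)))
  refine ⟨g, fun x hx ↦ hg0 x ?_, fun x hx ↦ hg1 x (not_lt.1 hx)⟩
  exact_mod_cast closure_lt_subset_le (by fun_prop) continuous_const hx

end ZeroSets

theorem closed_FCGdelta_iff_general {X : Type*} [TopologicalSpace X]
    (P : Set (Set X)) (A : Set X) :
    IsFCGdelta P A ↔
      ∃ f ∈ {f : ContinuousMap X ℝ | ∀ n : ℕ, ∃ Q ∈ P, Q ⊆ {x | |f x| < 1 / (n + 1)}},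
        A = {x | f x = 0} := by
  refine ⟨IsFCGdelta.exists_eq_setOf_eq_zero, ?_⟩
  rintro ⟨f, hf, rfl⟩
  exact isFCGdelta_setOf_eq_zero f hf

/-- a closed set is `F`-`CG_δ` iff it is `Z(f)` for some `f ∈ C_{∞P}(X)`. -/
theorem closed_FCGdelta_iff {X : Type*} [TopologicalSpace X] [T2Space X]
    [CompletelyRegularSpace X]
    (P : Set (Set X)) (hne : P.Nonempty)
    (hopen : ∀ A ∈ P, IsOpen A) (hAne : ∀ A ∈ P, A.Nonempty)
    (hbase : ∀ A ∈ P, ∀ B ∈ P, ∃ C ∈ P, C ⊆ A ∩ B)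
    (A : Set X) (hA : IsClosed A) :
    IsFCGdelta P A ↔
      ∃ f ∈ {f : ContinuousMap X ℝ | ∀ n : ℕ, ∃ Q ∈ P, Q ⊆ {x | |f x| < 1 / (n + 1)}},
        A = {x | f x = 0} :=
  closed_FCGdelta_iff_general P A
end

section
/- For P = {ℝ ∖ [1/n, n] : n ∈ ℕ}, P is an open filter base on ℝ and C_{∞P}(ℝ) is not an ideal of C(ℝ): there exist f ∈ C_{∞P}(ℝ) and g ∈ C(ℝ) with fg ∉ C_{∞P}(ℝ). -/
/-!
The sets `ℝ ∖ [1/n, n]` decrease in `n`, so they form an open filter base. The function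
`f(x) = x⁺ / (1 + x²)` is bounded by `x⁺` and, for `x > 0`, by `1/x`, so it is small off
`[1/n, n]`; but `f · (1 + x²) = x⁺` is at least `1` on `[1, ∞)`, which meets every
`ℝ ∖ [1/n, n]`.
-/

open Set

def complIccBase : Set (Set ℝ) := {S | ∃ n : ℕ, 1 ≤ n ∧ S = (Icc ((1 : ℝ) / n) (n : ℝ))ᶜ}

/-- `f ∈ C_{∞P}(X)`, with the thresholds `1/n` indexed from `n + 1` to avoid `1/0`. -/
def VanishesAlong {X : Type*} (P : Set (Set X)) (f : X → ℝ) : Prop :=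
  ∀ n : ℕ, ∃ A ∈ P, A ⊆ {x | |f x| < 1 / (n + 1)}

lemma compl_Icc_one_div_mem_complIccBase {n : ℕ} (hn : 1 ≤ n) :
    (Icc ((1 : ℝ) / n) n)ᶜ ∈ complIccBase :=
  ⟨n, hn, rfl⟩

lemma compl_Icc_one_div_antitone {m n : ℕ} (hm : 1 ≤ m) (hmn : m ≤ n) :
    (Icc ((1 : ℝ) / n) n)ᶜ ⊆ (Icc ((1 : ℝ) / m) m)ᶜ := by
  have hm' : (0 : ℝ) < m := by exact_mod_cast hm
  have hmn' : (m : ℝ) ≤ n := by exact_mod_cast hmn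
  exact compl_subset_compl.mpr (Icc_subset_Icc (one_div_le_one_div_of_le hm' hmn') hmn')

lemma complIccBase_isOpen_nonempty :
    ∀ S ∈ complIccBase, IsOpen S ∧ S.Nonempty := by
  rintro S ⟨n, -, rfl⟩
  refine ⟨isClosed_Icc.isOpen_compl, -1, fun h => ?_⟩
  have : (0 : ℝ) ≤ 1 / n := by positivity
  linarith [h.1]

lemma complIccBase_exists_subset_inter :
    ∀ S ∈ complIccBase, ∀ T ∈ complIccBase, ∃ U ∈ complIccBase, U ⊆ S ∩ T := by
  rintro S ⟨m, hm, rfl⟩ T ⟨n, hn, rfl⟩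
  exact ⟨_, compl_Icc_one_div_mem_complIccBase (hm.trans (le_max_left m n)),
    subset_inter (compl_Icc_one_div_antitone hm (le_max_left m n))
      (compl_Icc_one_div_antitone hn (le_max_right m n))⟩

lemma not_vanishesAlong_complIccBase_of_one_le {f : ℝ → ℝ} (hf : ∀ x, 1 ≤ x → 1 ≤ |f x|) :
    ¬ VanishesAlong complIccBase f := by
  intro h
  obtain ⟨A, ⟨m, -, rfl⟩, hA⟩ := h 0
  have hm : (0 : ℝ) ≤ m := m.cast_nonneg
  have hout : (m : ℝ) + 1 ∈ (Icc ((1 : ℝ) / m) m)ᶜ := fun hx => by linarith [hx.2]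
  have hsmall : |f (m + 1)| < 1 := by simpa using hA hout
  linarith [hf (m + 1) (by linarith)]

noncomputable def decayWitness : C(ℝ, ℝ) :=
  ⟨fun x => max x 0 / (1 + x ^ 2),
    (continuous_id.max continuous_const).div (by fun_prop) fun x => by positivity⟩

def growthWitness : C(ℝ, ℝ) := ⟨fun x => 1 + x ^ 2, by fun_prop⟩

lemma decayWitness_apply (x : ℝ) : decayWitness x = max x 0 / (1 + x ^ 2) := rfl

lemma decayWitness_mul_growthWitness_apply (x : ℝ) :
    (decayWitness * growthWitness) x = max x 0 := by
  have : (1 : ℝ) + x ^ 2 ≠ 0 := by positivity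
  simp [decayWitness_apply, growthWitness, this]

lemma abs_decayWitness_le_max (x : ℝ) : |decayWitness x| ≤ max x 0 := by
  rw [decayWitness_apply, abs_of_nonneg (by positivity)]
  exact div_le_self (le_max_right x 0) (by nlinarith)

lemma abs_decayWitness_lt_inv {x : ℝ} (hx : 0 < x) : |decayWitness x| < 1 / x := by
  rw [decayWitness_apply, max_eq_left hx.le, abs_of_nonneg (by positivity),
    div_lt_div_iff₀ (by positivity) hx]
  nlinarith

lemma vanishesAlong_complIccBase_decayWitness : VanishesAlong complIccBase decayWitness := by
  intro n
  have hn : (0 : ℝ) < n + 1 := by positivity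
  refine ⟨_, compl_Icc_one_div_mem_complIccBase (Nat.le_add_left 1 n), fun x hx => ?_⟩
  simp only [mem_compl_iff, mem_Icc, not_and_or, not_le, Nat.cast_add, Nat.cast_one] at hx
  rcases hx with hx | hx
  · exact (abs_decayWitness_le_max x).trans_lt (max_lt hx (by positivity))
  · calc |decayWitness x| < 1 / x := abs_decayWitness_lt_inv (hn.trans hx)
      _ < 1 / (n + 1) := one_div_lt_one_div_of_lt hn hx

/-- for `P = {ℝ∖[1/n, n] : n ≥ 1}`, `P` is an open filter base on `ℝ` and
`C_{∞P}(ℝ)` is not closed under multiplication by elements of `C(ℝ)`. -/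
theorem cInfP_not_ideal_real :
    (∀ S ∈ {S : Set ℝ | ∃ n : ℕ, 1 ≤ n ∧ S = (Set.Icc ((1 : ℝ) / n) (n : ℝ))ᶜ},
        IsOpen S ∧ S.Nonempty) ∧
    (∀ S ∈ {S : Set ℝ | ∃ n : ℕ, 1 ≤ n ∧ S = (Set.Icc ((1 : ℝ) / n) (n : ℝ))ᶜ},
      ∀ T ∈ {S : Set ℝ | ∃ n : ℕ, 1 ≤ n ∧ S = (Set.Icc ((1 : ℝ) / n) (n : ℝ))ᶜ},
        ∃ U ∈ {S : Set ℝ | ∃ n : ℕ, 1 ≤ n ∧ S = (Set.Icc ((1 : ℝ) / n) (n : ℝ))ᶜ},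
          U ⊆ S ∩ T) ∧
    ∃ f g : ContinuousMap ℝ ℝ,
      (∀ n : ℕ, ∃ A ∈ {S : Set ℝ | ∃ n : ℕ, 1 ≤ n ∧ S = (Set.Icc ((1 : ℝ) / n) (n : ℝ))ᶜ},
        A ⊆ {x | |f x| < 1 / (n + 1)}) ∧
      ¬ (∀ n : ℕ, ∃ A ∈ {S : Set ℝ | ∃ n : ℕ, 1 ≤ n ∧ S = (Set.Icc ((1 : ℝ) / n) (n : ℝ))ᶜ},
        A ⊆ {x | |(f * g) x| < 1 / (n + 1)}) := by
  have hprod : ¬ VanishesAlong complIccBase (decayWitness * growthWitness) :=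
    not_vanishesAlong_complIccBase_of_one_le (f := ⇑(decayWitness * growthWitness))
      fun x hx => by
        rwa [decayWitness_mul_growthWitness_apply, max_eq_left (by linarith),
          abs_of_nonneg (by linarith)]
  exact ⟨complIccBase_isOpen_nonempty, complIccBase_exists_subset_inter,
    decayWitness, growthWitness, vanishesAlong_complIccBase_decayWitness, hprod⟩
end

section
/- The following are equivalent: (1) C_{∞P}(X) is an ideal of C(X) and for every F ∈ F the set X∖cl(F) is bounded; (2) the set of non-cluster points of F (i.e. X ∖ ⋂_{F∈F} cl(F)) is bounded; (3) the complement of every closed F-CG_δ subset of X is bounded. -/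
/-- `A ⊆ X` is bounded (relatively pseudocompact): every `f ∈ C(X)` is bounded on `A`. -/
def IsRelBounded {X : Type*} [TopologicalSpace X] (A : Set X) : Prop :=
  ∀ f : ContinuousMap X ℝ, ∃ M : ℝ, ∀ x ∈ A, |f x| ≤ M

open Filter Topology

section

open Set

variable {X : Type*} [TopologicalSpace X] {l : Filter X} {P : Set (Set X)}

lemma IsRelBounded.mono {A B : Set X} (h : A ⊆ B) (hB : IsRelBounded B) : IsRelBounded A :=
  fun f => (hB f).imp fun _ hM x hx => hM x (h hx)

lemma not_isRelBounded_iff {A : Set X} :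
    ¬IsRelBounded A ↔
      ∃ g : C(X, ℝ), ∃ x : ℕ → X, (∀ n, x n ∈ A) ∧ ∀ n, (2 : ℝ) ^ n < |g (x n)| := by
  constructor
  · intro hA
    simp only [IsRelBounded, not_forall, not_exists, not_le] at hA
    obtain ⟨g, hg⟩ := hA
    choose x hxA hx using fun n : ℕ => hg (2 ^ n)
    exact ⟨g, x, hxA, hx⟩
  · rintro ⟨g, x, hxA, hx⟩ hA
    obtain ⟨M, hM⟩ := hA g
    obtain ⟨n, hn⟩ := pow_unbounded_of_one_lt M one_lt_two
    exact (hn.trans (hx n)).not_ge (hM _ (hxA n))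

lemma tendsto_zero_iff_forall_abs_lt_one_div {α : Type*} {l : Filter α} {f : α → ℝ} :
    Tendsto f l (𝓝 0) ↔ ∀ n : ℕ, {x | |f x| < 1 / (n + 1)} ∈ l := by
  simp only [Metric.nhds_basis_ball_inv_nat_succ.tendsto_right_iff, true_imp_iff,
    Metric.mem_ball, Real.dist_0_eq_abs]
  rfl

lemma ClusterPt.eq_of_tendsto {Y : Type*} [TopologicalSpace Y] [T2Space Y] {x : X}
    (hx : ClusterPt x l) {f : X → Y} (hf : Continuous f) {y : Y}
    (hfl : Tendsto f l (𝓝 y)) : f x = y :=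
  tendsto_nhds_unique' hx ((hf.tendsto x).mono_left inf_le_left) (hfl.mono_left inf_le_right)

lemma compl_closure_subset_setOf_not_clusterPt {F : Set X} (hF : F ∈ l) :
    (closure F)ᶜ ⊆ {x | ¬ClusterPt x l} :=
  fun _ hx hcl => hx (clusterPt_iff_forall_mem_closure.1 hcl F hF)

lemma exists_ideal_coe_eq_setOf_tendsto_zero (hl : IsRelBounded {x | ¬ClusterPt x l}) :
    ∃ I : Ideal C(X, ℝ), (I : Set C(X, ℝ)) = {f : C(X, ℝ) | Tendsto f l (𝓝 0)} := by
  refine ⟨{ carrier := {f : C(X, ℝ) | Tendsto f l (𝓝 0)}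
            add_mem' := fun hf hg => zero_add (0 : ℝ) ▸ hf.add hg
            zero_mem' := tendsto_const_nhds
            smul_mem' := fun c f hf => ?_ }, rfl⟩
  obtain ⟨M, hM⟩ := hl c
  have hbound : ∀ y, ‖c y * f y‖ ≤ M * |f y| := by
    intro y
    by_cases hy : ClusterPt y l
    · simp [hy.eq_of_tendsto f.continuous hf]
    · rw [Real.norm_eq_abs, abs_mul]
      exact mul_le_mul_of_nonneg_right (hM y hy) (abs_nonneg _)
  have hMf : Tendsto (fun y => M * |f y|) l (𝓝 0) := by simpa using hf.abs.const_mul M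
  exact squeeze_zero_norm' (Eventually.of_forall hbound) hMf

lemma exists_continuousMap_zero_of_le_one_of_ge (f : C(X, ℝ)) {a b : ℝ} (hab : a < b) :
    ∃ g : C(X, ℝ), (∀ x, f x ≤ a → g x = 0) ∧ ∀ x, b ≤ f x → g x = 1 := by
  obtain ⟨h, h0, h1, -⟩ := exists_continuous_zero_one_of_isClosed isClosed_Iic isClosed_Ici
    (Iic_disjoint_Ici.2 hab.not_ge)
  exact ⟨h.comp f, fun x hx => h0 (mem_Iic.2 hx), fun x hx => h1 (mem_Ici.2 hx)⟩

lemma IsFCGdelta.exists_closure_subset {A : Set X} (hA : IsFCGdelta P A) :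
    ∃ B : ℕ → Set X, A = ⋂ i, B i ∧ (∀ i, ∃ Q ∈ P, Q ⊆ B i) ∧ ∀ i, closure (B (i + 1)) ⊆ B i := by
  obtain ⟨B, hAB, -, hBP, hsep⟩ := hA
  refine ⟨B, hAB, hBP, fun i x hx => ?_⟩
  obtain ⟨g, hg0, hg1⟩ := hsep i
  by_contra hxB
  exact zero_ne_one ((hg0 x hx).symm.trans (hg1 x hxB))

lemma IsFCGdelta.isClosed {A : Set X} (hA : IsFCGdelta P A) : IsClosed A := by
  obtain ⟨B, rfl, -, hB⟩ := hA.exists_closure_subset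
  have hBcl : ⋂ i, B i = ⋂ i, closure (B (i + 1)) :=
    (subset_iInter fun i => (iInter_subset B (i + 1)).trans subset_closure).antisymm
      (iInter_mono hB)
  rw [hBcl]
  exact isClosed_iInter fun _ => isClosed_closure

lemma IsFCGdelta.compl_subset_setOf_not_clusterPt (hP : IsBasis (· ∈ P) id)
    {A : Set X} (hA : IsFCGdelta P A) : Aᶜ ⊆ {x | ¬ClusterPt x hP.filter} := by
  obtain ⟨B, rfl, hBP, hB⟩ := hA.exists_closure_subset
  intro x hx
  obtain ⟨i, hi⟩ : ∃ i, x ∉ B i := by simpa using hx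
  exact compl_closure_subset_setOf_not_clusterPt (hP.mem_filter_iff.2 (hBP (i + 1)))
    fun hcl => hi (hB i hcl)

lemma isFCGdelta_iInter_lt_half_pow (hP : IsBasis (· ∈ P) id) {ψ : C(X, ℝ)}
    (hψ : Tendsto ψ hP.filter (𝓝 0)) : IsFCGdelta P (⋂ i : ℕ, {y | ψ y < (1 / 2 : ℝ) ^ i}) := by
  refine ⟨fun i => {y | ψ y < (1 / 2 : ℝ) ^ i}, rfl,
    fun i => isOpen_lt ψ.continuous continuous_const,
    fun i => hP.mem_filter_iff.1 (hψ.eventually (eventually_lt_nhds (by positivity))), fun i => ?_⟩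
  obtain ⟨g, hg0, hg1⟩ := exists_continuousMap_zero_of_le_one_of_ge ψ
    (pow_lt_pow_right_of_lt_one₀ (a := (1 / 2 : ℝ)) (by norm_num) (by norm_num) i.lt_succ_self)
  exact ⟨g, fun x hx => hg0 x (closure_lt_subset_le ψ.continuous continuous_const hx),
    fun x hx => hg1 x (not_lt.1 hx)⟩

section CompletelyRegular

variable [CompletelyRegularSpace X]

lemma exists_continuous_eventually_eq_zero_of_not_clusterPt {x : X} (hx : ¬ClusterPt x l) :
    ∃ φ : X → ℝ, Continuous φ ∧ φ x = 1 ∧ (∀ y, φ y ∈ Icc 0 1) ∧ ∀ᶠ y in l, φ y = 0 := by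
  obtain ⟨s, hs, hxs⟩ : ∃ s ∈ l, x ∉ closure s := by
    simpa [clusterPt_iff_forall_mem_closure] using hx
  obtain ⟨f, hf, hfx, hfs⟩ :=
    CompletelyRegularSpace.completely_regular x (closure s) isClosed_closure hxs
  refine ⟨fun y => 1 - (f y : ℝ), continuous_const.sub (continuous_subtype_val.comp hf),
    by simp [hfx], fun y => ⟨by simp [unitInterval.le_one], by simp [unitInterval.nonneg]⟩, ?_⟩
  filter_upwards [hs] with y hy
  simp [hfs (subset_closure hy)]

lemma exists_tendsto_zero_half_pow_le_of_not_clusterPt {x : ℕ → X}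
    (hx : ∀ n, ¬ClusterPt (x n) l) :
    ∃ ψ : C(X, ℝ), Tendsto ψ l (𝓝 0) ∧ ∀ n, (1 / 2 : ℝ) ^ n ≤ ψ (x n) := by
  choose φ hφc hφx hφI hφl using
    fun n => exists_continuous_eventually_eq_zero_of_not_clusterPt (hx n)
  have hbound : ∀ n y, ‖(1 / 2 : ℝ) ^ n * φ n y‖ ≤ (1 / 2) ^ n := fun n y => by
    rw [Real.norm_eq_abs, abs_mul, abs_of_nonneg (by positivity : (0 : ℝ) ≤ (1 / 2) ^ n),
      abs_of_nonneg (hφI n y).1]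
    exact mul_le_of_le_one_right (by positivity) (by simpa using (hφI n y).2)
  refine ⟨⟨fun y => ∑' n, (1 / 2 : ℝ) ^ n * φ n y,
    continuous_tsum (fun n => continuous_const.mul (hφc n)) summable_geometric_two hbound⟩,
    ?_, fun n => ?_⟩
  · have hterm : ∀ n, Tendsto (fun y => (1 / 2 : ℝ) ^ n * φ n y) l (𝓝 0) := fun n => by
      simpa using (tendsto_nhds_of_eventually_eq (hφl n)).const_mul ((1 / 2 : ℝ) ^ n)
    simpa using tendsto_tsum_of_dominated_convergence summable_geometric_two hterm
      (Eventually.of_forall fun y n => hbound n y)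
  · calc (1 / 2 : ℝ) ^ n = (1 / 2) ^ n * φ n (x n) := by rw [hφx n, mul_one]
      _ ≤ ∑' k, (1 / 2 : ℝ) ^ k * φ k (x n) :=
        (summable_geometric_two.of_norm_bounded fun k => hbound k (x n)).le_tsum n
          fun k _ => mul_nonneg (by positivity) (hφI k (x n)).1

lemma isRelBounded_of_ideal_coe_eq_setOf_tendsto_zero {I : Ideal C(X, ℝ)}
    (hI : (I : Set C(X, ℝ)) = {f : C(X, ℝ) | Tendsto f l (𝓝 0)})
    (hl : ∀ F ∈ l, IsRelBounded (closure F)ᶜ) : IsRelBounded {x | ¬ClusterPt x l} := by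
  by_contra hN
  obtain ⟨g, x, hxN, hgx⟩ := not_isRelBounded_iff.1 hN
  obtain ⟨ψ, hψl, hψx⟩ := exists_tendsto_zero_half_pow_le_of_not_clusterPt hxN
  have hψI : ψ ∈ I := by rwa [← SetLike.mem_coe, hI]
  have hk : Tendsto (g * g * ψ) l (𝓝 0) := by
    have := I.mul_mem_left (g * g) hψI
    rwa [← SetLike.mem_coe, hI] at this
  have hF : {y | (g * g * ψ) y ≤ 1} ∈ l := hk.eventually (eventually_le_nhds one_pos)
  have hFc : IsClosed {y | (g * g * ψ) y ≤ 1} := isClosed_le (map_continuous _) continuous_const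
  refine not_isRelBounded_iff.2 ⟨g, x, fun n => ?_, hgx⟩ (hFc.closure_eq ▸ hl _ hF)
  have hsq : (2 : ℝ) ^ n * 2 ^ n < g (x n) * g (x n) := by
    rw [← abs_mul_abs_self (g (x n))]
    exact mul_self_lt_mul_self (by positivity) (hgx n)
  simp only [mem_compl_iff, mem_ofPred_eq, not_le, ContinuousMap.mul_apply]
  calc (1 : ℝ) ≤ 2 ^ n := one_le_pow₀ one_le_two
    _ = 2 ^ n * 2 ^ n * (1 / 2) ^ n := by rw [mul_assoc, ← mul_pow]; norm_num
    _ < g (x n) * g (x n) * (1 / 2) ^ n := mul_lt_mul_of_pos_right hsq (by positivity)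
    _ ≤ g (x n) * g (x n) * ψ (x n) := mul_le_mul_of_nonneg_left (hψx n) (mul_self_nonneg _)

lemma isRelBounded_setOf_not_clusterPt_of_forall_isFCGdelta (hP : IsBasis (· ∈ P) id)
    (h : ∀ A : Set X, IsClosed A → IsFCGdelta P A → IsRelBounded Aᶜ) :
    IsRelBounded {x | ¬ClusterPt x hP.filter} := by
  by_contra hN
  obtain ⟨g, x, hxN, hgx⟩ := not_isRelBounded_iff.1 hN
  obtain ⟨ψ, hψl, hψx⟩ := exists_tendsto_zero_half_pow_le_of_not_clusterPt hxN
  have hA := isFCGdelta_iInter_lt_half_pow hP hψl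
  refine not_isRelBounded_iff.2 ⟨g, x, fun n => ?_, hgx⟩ (h _ hA.isClosed hA)
  simp only [mem_compl_iff, mem_iInter, mem_ofPred_eq, not_forall, not_lt]
  exact ⟨n, hψx n⟩

end CompletelyRegular

end

theorem cInfP_ideal_tfae_general {X : Type*} [TopologicalSpace X]
    [CompletelyRegularSpace X]
    (P : Set (Set X)) (hne : P.Nonempty)
    (hbase : ∀ A ∈ P, ∀ B ∈ P, ∃ C ∈ P, C ⊆ A ∩ B) :
    (((∃ I : Ideal (ContinuousMap X ℝ), (I : Set (ContinuousMap X ℝ)) =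
        {f : ContinuousMap X ℝ | ∀ n : ℕ, ∃ Q ∈ P, Q ⊆ {x | |f x| < (1 : ℝ) / (n + 1)}}) ∧
      (∀ F : Set X, (∃ Q ∈ P, Q ⊆ F) → IsRelBounded (closure F)ᶜ)) ↔
      IsRelBounded {x : X | ∃ F : Set X, (∃ Q ∈ P, Q ⊆ F) ∧ x ∉ closure F}) ∧
    (IsRelBounded {x : X | ∃ F : Set X, (∃ Q ∈ P, Q ⊆ F) ∧ x ∉ closure F} ↔
      ∀ A : Set X, IsClosed A → IsFCGdelta P A → IsRelBounded Aᶜ) := by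
  have hP : IsBasis (· ∈ P) id := ⟨hne, fun hA hB => hbase _ hA _ hB⟩
  have hmem : ∀ F, (∃ Q ∈ P, Q ⊆ F) ↔ F ∈ hP.filter := fun F => hP.mem_filter_iff.symm
  have hN : {x : X | ∃ F : Set X, (∃ Q ∈ P, Q ⊆ F) ∧ x ∉ closure F} =
      {x | ¬ClusterPt x hP.filter} := by
    simp [hmem, clusterPt_iff_forall_mem_closure]
  have hS : {f : C(X, ℝ) | ∀ n : ℕ, ∃ Q ∈ P, Q ⊆ {x | |f x| < (1 : ℝ) / (n + 1)}} =
      {f : C(X, ℝ) | Tendsto f hP.filter (𝓝 0)} := by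
    simp only [hmem, tendsto_zero_iff_forall_abs_lt_one_div]
  rw [hN, hS]
  simp only [hmem]
  refine ⟨⟨fun ⟨⟨_, hI⟩, hl⟩ => isRelBounded_of_ideal_coe_eq_setOf_tendsto_zero hI hl,
    fun h => ⟨exists_ideal_coe_eq_setOf_tendsto_zero h,
      fun _ hF => h.mono (compl_closure_subset_setOf_not_clusterPt hF)⟩⟩,
    fun h _ _ hA => h.mono (hA.compl_subset_setOf_not_clusterPt hP),
    isRelBounded_setOf_not_clusterPt_of_forall_isFCGdelta hP⟩

/-- equivalence of (1) `C_{∞P}(X)` is an ideal of `C(X)` and `X∖cl F` is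
bounded for every `F ∈ F`; (2) the set of non-cluster points of `F` is bounded;
(3) the complement of every closed `F`-`CG_δ` is bounded. -/
theorem cInfP_ideal_tfae {X : Type*} [TopologicalSpace X] [T2Space X]
    [CompletelyRegularSpace X]
    (P : Set (Set X)) (hne : P.Nonempty)
    (hopen : ∀ A ∈ P, IsOpen A) (hAne : ∀ A ∈ P, A.Nonempty)
    (hbase : ∀ A ∈ P, ∀ B ∈ P, ∃ C ∈ P, C ⊆ A ∩ B) :
    (((∃ I : Ideal (ContinuousMap X ℝ), (I : Set (ContinuousMap X ℝ)) =
        {f : ContinuousMap X ℝ | ∀ n : ℕ, ∃ Q ∈ P, Q ⊆ {x | |f x| < (1 : ℝ) / (n + 1)}}) ∧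
      (∀ F : Set X, (∃ Q ∈ P, Q ⊆ F) → IsRelBounded (closure F)ᶜ)) ↔
      IsRelBounded {x : X | ∃ F : Set X, (∃ Q ∈ P, Q ⊆ F) ∧ x ∉ closure F}) ∧
    (IsRelBounded {x : X | ∃ F : Set X, (∃ Q ∈ P, Q ⊆ F) ∧ x ∉ closure F} ↔
      ∀ A : Set X, IsClosed A → IsFCGdelta P A → IsRelBounded Aᶜ) :=
  cInfP_ideal_tfae_general P hne hbase
end

section
/- An ideal E of the ring C_{∞P}(X) is essential in C_{∞P}(X) if and only if there is no subset V of X with X∖V ∈ F, int V ≠ ∅, and V ⊆ ⋂_{f∈E} Z(f). -/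
/-!
If `E` is not essential, some nonzero `f ∈ C_{∞P}(X)` is annihilated by `E`; since `f` is small on
a member of `P`, the set `V = {x | 1/(n+1) < |f x|}` avoids a member of `P` for suitable `n`, is open
and nonempty, and every `g ∈ E` vanishes on it. Conversely, given such a `V`, complete regularity
yields a nonzero `f` vanishing off `int V`; it lies in `C_{∞P}(X)` because it vanishes on the member
of `P` inside `X ∖ V`, and `f g = 0` for every `g ∈ E` because `g` vanishes on `V`.
-/

open Set

section

variable {X : Type*} [TopologicalSpace X]

theorem CompletelyRegularSpace.exists_continuousMap_ne_zero_eqOn_compl [CompletelyRegularSpace X]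
    {U : Set X} (hU : IsOpen U) {x : X} (hx : x ∈ U) :
    ∃ f : C(X, ℝ), f x ≠ 0 ∧ EqOn f 0 Uᶜ := by
  obtain ⟨φ, hφ, hφx, hφU⟩ := completely_regular_isOpen x U hU hx
  refine ⟨⟨fun y => 1 - (φ y : ℝ), by fun_prop⟩, by simp [hφx], fun y hy => ?_⟩
  simp [hφU hy]

namespace ContinuousMap

variable {R : Type*} [TopologicalSpace R] [MulZeroClass R] [ContinuousMul R]

theorem mul_eq_zero_of_eqOn_zero {f g : C(X, R)} {V : Set X} (hf : EqOn f 0 Vᶜ)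
    (hg : EqOn g 0 V) : f * g = 0 := by
  ext x
  by_cases hx : x ∈ V
  · simp [hg hx]
  · simp [hf hx]

theorem eqOn_zero_of_mul_eq_zero [NoZeroDivisors R] {f g : C(X, R)} (h : f * g = 0) :
    EqOn g 0 {x | f x ≠ 0} := fun x hx =>
  (mul_eq_zero.1 (congrFun (congrArg DFunLike.coe h) x)).resolve_left hx

end ContinuousMap

end

theorem essential_ideal_cInfP_iff_general {X : Type*} [TopologicalSpace X]
    [CompletelyRegularSpace X]
    (P : Set (Set X))
    (E : Set (ContinuousMap X ℝ)) :
    (∀ f ∈ {f : ContinuousMap X ℝ | ∀ n : ℕ, ∃ Q ∈ P, Q ⊆ {x | |f x| < 1 / (n + 1)}},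
      f ≠ 0 → ∃ g ∈ E, f * g ≠ 0) ↔
    ¬ ∃ V : Set X, (∃ Q ∈ P, Q ⊆ Vᶜ) ∧ (interior V).Nonempty ∧
        ∀ g ∈ E, V ⊆ {x | g x = 0} := by
  constructor
  · rintro hess ⟨V, ⟨Q, hQP, hQV⟩, ⟨x₀, hx₀⟩, hVE⟩
    obtain ⟨f, hfx₀, hf⟩ :=
      CompletelyRegularSpace.exists_continuousMap_ne_zero_eqOn_compl isOpen_interior hx₀
    have hfV : EqOn f 0 Vᶜ := hf.mono (compl_subset_compl.2 interior_subset)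
    have hf_mem : ∀ n : ℕ, ∃ Q ∈ P, Q ⊆ {x | |f x| < 1 / (n + 1)} := fun n =>
      ⟨Q, hQP, fun x hx => by simp [hfV (hQV hx), Nat.cast_add_one_pos]⟩
    obtain ⟨g, hgE, hfg⟩ := hess f hf_mem fun h => hfx₀ (by simp [h])
    exact hfg (ContinuousMap.mul_eq_zero_of_eqOn_zero hfV (hVE g hgE))
  · rintro hV f hf hf0
    by_contra! hE
    obtain ⟨x₀, hx₀⟩ := DFunLike.ne_iff.1 hf0
    obtain ⟨n, hn⟩ := exists_nat_one_div_lt (abs_pos.2 hx₀)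
    refine hV ⟨{x | 1 / (n + 1) < |f x|}, ?_, ?_, fun g hgE x hx => ?_⟩
    · obtain ⟨Q, hQP, hQ⟩ := hf n
      exact ⟨Q, hQP, fun x hx => lt_asymm (show |f x| < 1 / (n + 1) from hQ hx)⟩
    · rw [(isOpen_lt continuous_const f.continuous.abs).interior_eq]
      exact ⟨x₀, hn⟩
    · exact ContinuousMap.eqOn_zero_of_mul_eq_zero (hE g hgE)
        (abs_pos.1 (lt_trans (by positivity) hx))

/-- an ideal `E` of `C_{∞P}(X)` is essential iff `⋂ Z[E]` contains no set `V`
with `X∖V ∈ F` and `int V ≠ ∅`. Essentiality is expressed as: every nonzero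
`f ∈ C_{∞P}(X)` admits `g ∈ E` with `fg ≠ 0`. -/
theorem essential_ideal_cInfP_iff {X : Type*} [TopologicalSpace X] [T2Space X]
    [CompletelyRegularSpace X]
    (P : Set (Set X)) (hne : P.Nonempty)
    (hopen : ∀ A ∈ P, IsOpen A) (hAne : ∀ A ∈ P, A.Nonempty)
    (hbase : ∀ A ∈ P, ∀ B ∈ P, ∃ C ∈ P, C ⊆ A ∩ B)
    (E : Set (ContinuousMap X ℝ))
    (hE0 : (0 : ContinuousMap X ℝ) ∈ E)
    (hEsub : E ⊆ {f | ∀ n : ℕ, ∃ Q ∈ P, Q ⊆ {x | |f x| < 1 / (n + 1)}})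
    (hEadd : ∀ f ∈ E, ∀ g ∈ E, f + g ∈ E)
    (hEmul : ∀ f ∈ {f : ContinuousMap X ℝ | ∀ n : ℕ, ∃ Q ∈ P, Q ⊆ {x | |f x| < 1 / (n + 1)}},
      ∀ g ∈ E, f * g ∈ E) :
    (∀ f ∈ {f : ContinuousMap X ℝ | ∀ n : ℕ, ∃ Q ∈ P, Q ⊆ {x | |f x| < 1 / (n + 1)}},
      f ≠ 0 → ∃ g ∈ E, f * g ≠ 0) ↔
    ¬ ∃ V : Set X, (∃ Q ∈ P, Q ⊆ Vᶜ) ∧ (interior V).Nonempty ∧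
        ∀ g ∈ E, V ⊆ {x | g x = 0} :=
  essential_ideal_cInfP_iff_general P E
end

section
/- C^P(X) is an essential ideal of C(X) if and only if the family {V ⊆ X : V open and X∖V ∈ F} is a π-base for X (every nonempty open set contains a nonempty member of this family). -/
/-!
Both conditions say the same thing about each cozero set `coz g = support g`: some nonzero
multiple of `g` lies in `C^P(X)` iff `coz g` contains a nonempty open `V` with `X \ V ∈ F`.
Indeed `coz (g * k)` is such a `V`, and conversely, a function `k` which is `1` at a point of `V`
and vanishes off `V` gives `g * k ∈ C^P(X)` with `g * k ≠ 0`. Complete regularity supplies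
these functions `k`, and also a nonzero `g` with `coz g` inside any given nonempty open set.
-/

open Set Function

section

variable {X : Type*} [TopologicalSpace X]

lemma ContinuousMap.support_nonempty_iff {R : Type*} [TopologicalSpace R] [Zero R]
    {f : C(X, R)} : (support f).Nonempty ↔ f ≠ 0 :=
  Function.support_nonempty_iff.trans (DFunLike.coe_injective.ne_iff' rfl)

lemma CompletelyRegularSpace.exists_continuousMap_eq_one_support_subset
    [CompletelyRegularSpace X] {U : Set X} (hU : IsOpen U) {x : X} (hx : x ∈ U) :
    ∃ h : C(X, ℝ), h x = 1 ∧ support h ⊆ U := by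
  obtain ⟨f, hf, hfx, hfU⟩ := completely_regular_isOpen x U hU hx
  refine ⟨⟨fun y => 1 - f y, by fun_prop⟩, by simp [hfx],
    fun y hy => by_contra fun hyU => hy ?_⟩
  simp [hfU hyU]

lemma exists_mul_mem_ne_zero_iff_exists_isOpen_subset_support [CompletelyRegularSpace X]
    (P : Set (Set X)) (g : C(X, ℝ)) :
    (∃ k : C(X, ℝ),
        g * k ∈ {f : C(X, ℝ) | ∃ Q ∈ P, Q ⊆ {x | f x = 0}} ∧ g * k ≠ 0) ↔
      ∃ V : Set X, IsOpen V ∧ V.Nonempty ∧ V ⊆ support g ∧ ∃ Q ∈ P, Q ⊆ Vᶜ := by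
  constructor
  · rintro ⟨k, ⟨Q, hQP, hQ⟩, hgk⟩
    refine ⟨support (g * k), (g * k).continuous.isOpen_support,
      ContinuousMap.support_nonempty_iff.mpr hgk, ?_, Q, hQP, fun y hy => not_not.mpr (hQ hy)⟩
    exact support_mul_subset_left _ _
  · rintro ⟨V, hV, ⟨v, hv⟩, hVg, Q, hQP, hQV⟩
    obtain ⟨k, hkv, hkV⟩ :=
      CompletelyRegularSpace.exists_continuousMap_eq_one_support_subset hV hv
    refine ⟨k, ⟨Q, hQP, fun y hy => ?_⟩, fun hgk => ?_⟩
    · have hky : k y = 0 := notMem_support.mp fun hk => hQV hy (hkV hk)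
      simp [hky]
    · have hgv : g v = 0 := by simpa [hkv] using DFunLike.congr_fun hgk v
      exact hVg hv hgv

end

theorem cP_essential_iff_pi_base_general {X : Type*} [TopologicalSpace X]
    [CompletelyRegularSpace X]
    (P : Set (Set X)) :
    (∀ g : ContinuousMap X ℝ, g ≠ 0 → ∃ k : ContinuousMap X ℝ,
      g * k ∈ {f : ContinuousMap X ℝ | ∃ Q ∈ P, Q ⊆ {x | f x = 0}} ∧ g * k ≠ 0) ↔
    (∀ U : Set X, IsOpen U → U.Nonempty →
      ∃ V : Set X, IsOpen V ∧ V.Nonempty ∧ V ⊆ U ∧ ∃ Q ∈ P, Q ⊆ Vᶜ) := by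
  simp only [exists_mul_mem_ne_zero_iff_exists_isOpen_subset_support]
  constructor
  · rintro hess U hU ⟨x, hx⟩
    obtain ⟨g, hgx, hgU⟩ :=
      CompletelyRegularSpace.exists_continuousMap_eq_one_support_subset hU hx
    have hg : g ≠ 0 := ContinuousMap.support_nonempty_iff.mp ⟨x, by simp [hgx]⟩
    obtain ⟨V, hV, hVne, hVg, hQ⟩ := hess g hg
    exact ⟨V, hV, hVne, hVg.trans hgU, hQ⟩
  · intro hpi g hg
    exact hpi _ g.continuous.isOpen_support (ContinuousMap.support_nonempty_iff.mpr hg)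

/-- `C^P(X)` is an essential ideal of `C(X)` iff the open sets whose
complement belongs to `F` form a `π`-base for `X`. -/
theorem cP_essential_iff_pi_base {X : Type*} [TopologicalSpace X] [T2Space X]
    [CompletelyRegularSpace X]
    (P : Set (Set X)) (hne : P.Nonempty)
    (hopen : ∀ A ∈ P, IsOpen A) (hAne : ∀ A ∈ P, A.Nonempty)
    (hbase : ∀ A ∈ P, ∀ B ∈ P, ∃ C ∈ P, C ⊆ A ∩ B) :
    (∀ g : ContinuousMap X ℝ, g ≠ 0 → ∃ k : ContinuousMap X ℝ,
      g * k ∈ {f : ContinuousMap X ℝ | ∃ Q ∈ P, Q ⊆ {x | f x = 0}} ∧ g * k ≠ 0) ↔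
    (∀ U : Set X, IsOpen U → U.Nonempty →
      ∃ V : Set X, IsOpen V ∧ V.Nonempty ∧ V ⊆ U ∧ ∃ Q ∈ P, Q ⊆ Vᶜ) :=
  cP_essential_iff_pi_base_general P
end
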